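/- Let G=(V,A) be a loopless digraph and ℓ ≥ 1. Then the total number of feedback arc sets of the subdivision digraph H'(ℓ) equals Σ_{i=0}^{|A|} F_i(G)·(2^ℓ − 1)^i, where F_i(G) denotes the number of feedback arc sets of G of cardinality exactly i. -/

import Mathlib

/-- A digraph on vertex type `W` is given by its arc set `A ⊆ W × W`.
It is acyclic when the transitive closure of its arc relation is irreflexive
(equivalently, it has no cycle). -/
def Acyclic {W : Type*} (A : Set (W × W)) : Prop :=
  ∀ v : W, ¬ Relation.TransGen (fun u w => (u, w) ∈ A) v v

/-- `F` is a feedback arc set of the digraph with arc set `A`: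
`F ⊆ A` and the digraph `(V, A \ F)` is acyclic. -/
def IsFAS {W : Type*} (A F : Set (W × W)) : Prop :=
  F ⊆ A ∧ Acyclic (A \ F)

/-- The `i`-th node (for `0 ≤ i ≤ ℓ`) of the subdivision path replacing the arc
`a = (u,v)` in `H'(ℓ)`: node `0` is `u`, node `ℓ` is `v`, and the nodes in
between are the fresh vertices `a_1, …, a_{ℓ-1}`. -/
def HNode {V : Type*} (ℓ : ℕ) (a : V × V) (i : ℕ) : V ⊕ ((V × V) × ℕ) :=
  if i = 0 then Sum.inl a.1 else if i = ℓ then Sum.inl a.2 else Sum.inr (a, i)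

/-- The directed path `P_a` of `ℓ` arcs replacing the arc `a = (u,v)` in
`H'(ℓ)`: `(u,a_1), (a_1,a_2), …, (a_{ℓ-2},a_{ℓ-1}), (a_{ℓ-1},v)`
(for `ℓ = 1`, `P_a = {(u,v)}`). -/
def PathArcs {V : Type*} (ℓ : ℕ) (a : V × V) :
    Set ((V ⊕ ((V × V) × ℕ)) × (V ⊕ ((V × V) × ℕ))) :=
  { p | ∃ i < ℓ, p = (HNode ℓ a i, HNode ℓ a (i + 1)) }

/-- The arc set of the subdivision digraph `H'(ℓ)`: the union of the paths
`P_a` over all arcs `a` of `G`. -/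
def HArcs {V : Type*} (A : Set (V × V)) (ℓ : ℕ) :
    Set ((V ⊕ ((V × V) × ℕ)) × (V ⊕ ((V × V) × ℕ))) :=
  ⋃ a ∈ A, PathArcs ℓ a

/-!
An arc set `F'` of `H'(ℓ)` is a feedback arc set exactly when `hitArcs A ℓ F'`, the set of arcs
of `G` whose subdivision path meets `F'`, is a feedback arc set of `G`: a cycle of `H'(ℓ) \ F'`
must run along whole subdivision paths, so it contracts to a cycle of `G \ hitArcs A ℓ F'`, and
conversely every arc of that digraph expands to its path in `H'(ℓ) \ F'`. The subdivision paths
are pairwise disjoint sets of `ℓ` arcs, so the `F'` with `hitArcs A ℓ F' = F` arise by choosing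
a nonempty subset of each of the `|F|` paths over `F`, in `(2 ^ ℓ - 1) ^ |F|` ways.
-/

open Set Relation Function

theorem finite_setOf_isFAS {W : Type*} {A : Set (W × W)} (hA : A.Finite) :
    {F | IsFAS A F}.Finite :=
  hA.finite_subsets.subset fun _ hF => hF.1

theorem Set.ncard_eq_sum_ncard_fiberwise {α β : Type*} {s : Set α} (hs : s.Finite)
    {t : Finset β} {f : α → β} (hf : MapsTo f s t) :
    s.ncard = ∑ b ∈ t, {a ∈ s | f a = b}.ncard := by
  classical
  rw [ncard_eq_toFinset_card s hs, Finset.card_eq_sum_card_fiberwise (by simpa using hf)]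
  refine Finset.sum_congr rfl fun b _ => ?_
  rw [← ncard_coe_finset]
  congr 1
  ext a
  simp

theorem Set.ncard_setOf_subset_nonempty {α : Type*} {P : Set α} (hP : P.Finite) :
    {S : Set α | S ⊆ P ∧ S.Nonempty}.ncard = 2 ^ P.ncard - 1 := by
  have h : {S : Set α | S ⊆ P ∧ S.Nonempty} = 𝒫 P \ {∅} := by
    ext S
    simp [nonempty_iff_ne_empty]
  rw [h, ncard_sdiff_singleton_of_mem (empty_subset P), ncard_powerset P hP]

theorem Set.ncard_setOf_subset_biUnion_meeting_each {ι α : Type*} {P : ι → Set α}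
    (hP : Pairwise (Disjoint on P)) {s : Set ι} (hs : s.Finite) {n : ℕ}
    (hPfin : ∀ i ∈ s, (P i).Finite) (hPcard : ∀ i ∈ s, (P i).ncard = n) :
    {T : Set α | T ⊆ ⋃ i ∈ s, P i ∧ ∀ i ∈ s, (T ∩ P i).Nonempty}.ncard = (2 ^ n - 1) ^ s.ncard := by
  have : Fintype s := hs.fintype
  let e : {T : Set α | T ⊆ ⋃ i ∈ s, P i ∧ ∀ i ∈ s, (T ∩ P i).Nonempty} ≃
      ((i : s) → {S : Set α | S ⊆ P i ∧ S.Nonempty}) :=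
    { toFun T i := ⟨T.1 ∩ P i, inter_subset_right, T.2.2 i i.2⟩
      invFun g := ⟨⋃ i, (g i).1, iUnion_subset fun i => (g i).2.1.trans (subset_biUnion_of_mem i.2),
        fun i hi => (g ⟨i, hi⟩).2.2.mono <|
          subset_inter (subset_iUnion_of_subset ⟨i, hi⟩ subset_rfl) (g ⟨i, hi⟩).2.1⟩
      left_inv T := by
        ext x
        simpa [← inter_iUnion₂] using fun hx => T.2.1 hx
      right_inv g := by
        funext i
        ext x
        simp only [iUnion_inter, mem_iUnion, mem_inter_iff]
        refine ⟨fun ⟨j, hxj, hxi⟩ => ?_, fun hx => ⟨i, hx, (g i).2.1 hx⟩⟩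
        obtain rfl : j = i := Subtype.ext <| hP.eq <| not_disjoint_iff.mpr ⟨x, (g j).2.1 hxj, hxi⟩
        exact hxj }
  rw [← Nat.card_coe_set_eq, Nat.card_congr e, Nat.card_pi]
  simp only [Nat.card_coe_set_eq]
  rw [Finset.prod_congr rfl fun i _ => by
      rw [ncard_setOf_subset_nonempty (hPfin i i.2), hPcard i i.2],
    Finset.prod_const, Finset.card_univ, ← Nat.card_eq_fintype_card, Nat.card_coe_set_eq]

namespace Subdivision

abbrev HVertex (V : Type*) := V ⊕ ((V × V) × ℕ)

variable {V : Type*} {ℓ i j : ℕ} {a b : V × V}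

theorem hNode_zero (a : V × V) : HNode ℓ a 0 = .inl a.1 := by simp [HNode]

theorem hNode_self (hℓ : ℓ ≠ 0) (a : V × V) : HNode ℓ a ℓ = .inl a.2 := by simp [HNode, hℓ]

theorem hNode_of_ne (h0 : i ≠ 0) (hℓ : i ≠ ℓ) (a : V × V) : HNode ℓ a i = .inr (a, i) := by
  simp [HNode, h0, hℓ]

theorem hNode_eq_inl {v : V} (h : HNode ℓ a i = .inl v) :
    (i = 0 ∧ a.1 = v) ∨ (i = ℓ ∧ a.2 = v) := by
  unfold HNode at h
  split_ifs at h <;> simp_all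

theorem hNode_eq_inr {k : ℕ} (h : HNode ℓ a i = .inr (b, k)) : a = b ∧ i = k := by
  unfold HNode at h
  split_ifs at h
  simp_all

theorem eq_and_eq_of_pathArc_eq (hi : i < ℓ) (hj : j < ℓ)
    (h : (HNode ℓ a i, HNode ℓ a (i + 1)) = (HNode ℓ b j, HNode ℓ b (j + 1))) :
    a = b ∧ i = j := by
  obtain ⟨h₀, h₁⟩ := Prod.mk.inj h
  rcases Nat.eq_zero_or_pos i with rfl | hi0
  · rw [hNode_zero] at h₀
    obtain ⟨rfl, hb⟩ | ⟨rfl, -⟩ := hNode_eq_inl h₀.symm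
    · refine ⟨?_, rfl⟩
      rw [zero_add] at h₁
      by_cases h1 : 1 = ℓ
      · rw [← h1, hNode_self one_ne_zero, hNode_self one_ne_zero] at h₁
        exact Prod.ext hb.symm (Sum.inl.inj h₁)
      · rw [hNode_of_ne one_ne_zero h1, hNode_of_ne one_ne_zero h1] at h₁
        exact (Prod.mk.inj (Sum.inr.inj h₁)).1
    · omega
  · rw [hNode_of_ne hi0.ne' hi.ne] at h₀
    obtain ⟨hba, hji⟩ := hNode_eq_inr h₀.symm
    exact ⟨hba.symm, hji.symm⟩

theorem pathArcs_pairwise_disjoint : Pairwise (Disjoint on (PathArcs ℓ : V × V → _)) := by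
  intro a b hab
  refine Set.disjoint_left.mpr ?_
  rintro _ ⟨i, hi, rfl⟩ ⟨j, hj, h⟩
  exact hab (eq_and_eq_of_pathArc_eq hi hj h).1

theorem pathArcs_eq_image (ℓ : ℕ) (a : V × V) :
    PathArcs ℓ a = (fun i => (HNode ℓ a i, HNode ℓ a (i + 1))) '' Iio ℓ := by
  ext p
  simp [PathArcs, eq_comm]

theorem pathArcs_finite (ℓ : ℕ) (a : V × V) : (PathArcs ℓ a).Finite := by
  rw [pathArcs_eq_image]
  exact (finite_Iio ℓ).image _

theorem ncard_pathArcs (ℓ : ℕ) (a : V × V) : (PathArcs ℓ a).ncard = ℓ := by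
  have hinj : InjOn (fun i => (HNode ℓ a i, HNode ℓ a (i + 1))) (Iio ℓ) :=
    fun i hi j hj h => (eq_and_eq_of_pathArc_eq hi hj h).2
  rw [pathArcs_eq_image, hinj.ncard_image, ← Finset.coe_Iio, ncard_coe_finset, Nat.card_Iio]

def hitArcs (A : Set (V × V)) (ℓ : ℕ) (F' : Set (HVertex V × HVertex V)) : Set (V × V) :=
  {a ∈ A | (F' ∩ PathArcs ℓ a).Nonempty}

variable {A : Set (V × V)} {F' : Set (HVertex V × HVertex V)}

theorem hitArcs_subset : hitArcs A ℓ F' ⊆ A := sep_subset _ _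

theorem exists_of_mem_hArcs_diff {x y : HVertex V} (h : (x, y) ∈ HArcs A ℓ \ F') :
    ∃ b ∈ A, ∃ k < ℓ, x = HNode ℓ b k ∧ y = HNode ℓ b (k + 1) ∧
      (HNode ℓ b k, HNode ℓ b (k + 1)) ∉ F' := by
  obtain ⟨hxy, hF⟩ := h
  simp only [HArcs, PathArcs, mem_iUnion, mem_ofPred_eq, Prod.mk.injEq] at hxy
  obtain ⟨b, hb, k, hk, rfl, rfl⟩ := hxy
  exact ⟨b, hb, k, hk, rfl, rfl, hF⟩

theorem notMem_hitArcs_of_forall_notMem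
    (h : ∀ j < ℓ, (HNode ℓ a j, HNode ℓ a (j + 1)) ∉ F') : a ∉ hitArcs A ℓ F' := by
  rintro ⟨-, _, hp, j, hj, rfl⟩
  exact h j hj hp

theorem transGen_of_notMem_hitArcs (hℓ : ℓ ≠ 0) (ha : a ∈ A) (hF : a ∉ hitArcs A ℓ F') :
    TransGen (fun x y => (x, y) ∈ HArcs A ℓ \ F') (.inl a.1) (.inl a.2) := by
  have hstep : ∀ i < ℓ, (HNode ℓ a i, HNode ℓ a (i + 1)) ∈ HArcs A ℓ \ F' := fun i hi =>
    ⟨mem_biUnion ha ⟨i, hi, rfl⟩, fun hp => hF ⟨ha, _, hp, i, hi, rfl⟩⟩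
  have hpath : ∀ i, 0 < i → i ≤ ℓ →
      TransGen (fun x y => (x, y) ∈ HArcs A ℓ \ F') (HNode ℓ a 0) (HNode ℓ a i) := by
    intro i hi0
    induction i with
    | zero => omega
    | succ i ih =>
      intro hi
      rcases Nat.eq_zero_or_pos i with rfl | hi0
      · exact .single (hstep 0 hi)
      · exact (ih hi0 (by omega)).tail (hstep i hi)
  simpa only [hNode_zero, hNode_self hℓ] using hpath ℓ (Nat.pos_of_ne_zero hℓ) le_rfl

-- The arcs still ahead on the current subdivision path avoid `F'`; once the path is entered at
-- its start, this puts the whole arc of `G` outside `hitArcs A ℓ F'`.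
theorem exists_hNode_of_transGen_inl {x : HVertex V} {v : V}
    (h : TransGen (fun x y => (x, y) ∈ HArcs A ℓ \ F') x (.inl v)) :
    ∃ a ∈ A, ∃ i < ℓ, x = HNode ℓ a i ∧
      (∀ j, i ≤ j → j < ℓ → (HNode ℓ a j, HNode ℓ a (j + 1)) ∉ F') ∧
      ReflTransGen (fun u w => (u, w) ∈ A \ hitArcs A ℓ F') a.2 v := by
  induction h using TransGen.head_induction_on with
  | single hxy =>
    obtain ⟨b, hb, k, hk, rfl, hy, hkF⟩ := exists_of_mem_hArcs_diff hxy
    obtain ⟨hk0, -⟩ | ⟨hkℓ, rfl⟩ := hNode_eq_inl hy.symm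
    · omega
    · refine ⟨b, hb, k, hk, rfl, fun j hkj hj => ?_, .refl⟩
      obtain rfl : j = k := by omega
      exact hkF
  | head hxy _ ih =>
    obtain ⟨a, ha, i, hi, hy, hfree, hreach⟩ := ih
    obtain ⟨b, hb, k, hk, rfl, hy', hkF⟩ := exists_of_mem_hArcs_diff hxy
    rw [hy'] at hy
    by_cases hkℓ : k + 1 = ℓ
    · rw [hkℓ, hNode_self (by omega)] at hy
      obtain ⟨rfl, hab⟩ | ⟨rfl, -⟩ := hNode_eq_inl hy.symm
      · have ha' : a ∉ hitArcs A ℓ F' :=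
          notMem_hitArcs_of_forall_notMem fun j hj => hfree j j.zero_le hj
        refine ⟨b, hb, k, hk, rfl, fun j hkj hj => ?_, hab ▸ hreach.head ⟨ha, ha'⟩⟩
        obtain rfl : j = k := by omega
        exact hkF
      · omega
    · rw [hNode_of_ne (by omega) hkℓ] at hy
      obtain ⟨rfl, rfl⟩ := hNode_eq_inr hy.symm
      refine ⟨a, hb, k, hk, rfl, fun j hkj hj => ?_, hreach⟩
      rcases hkj.eq_or_lt with rfl | hkj
      · exact hkF
      · exact hfree j hkj hj

theorem exists_inl_cycle_of_inr_cycle (a : V × V) (i : ℕ)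
    (h : TransGen (fun x y => (x, y) ∈ HArcs A ℓ \ F') (.inr (a, i)) (.inr (a, i))) :
    ∃ v, TransGen (fun x y => (x, y) ∈ HArcs A ℓ \ F') (.inl v) (.inl v) := by
  obtain ⟨y, hxy, hyx⟩ := TransGen.head'_iff.mp h
  obtain ⟨b, -, k, hk, hx, rfl, -⟩ := exists_of_mem_hArcs_diff hxy
  obtain ⟨rfl, rfl⟩ := hNode_eq_inr hx.symm
  have hcycle := TransGen.tail' hyx hxy
  by_cases hkℓ : k + 1 = ℓ
  · rw [hkℓ, hNode_self (by omega)] at hcycle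
    exact ⟨_, hcycle⟩
  · rw [hNode_of_ne (by omega) hkℓ] at hcycle
    exact exists_inl_cycle_of_inr_cycle b (k + 1) hcycle
termination_by ℓ - i

theorem acyclic_hArcs_diff_iff (hℓ : ℓ ≠ 0) :
    Acyclic (HArcs A ℓ \ F') ↔ Acyclic (A \ hitArcs A ℓ F') := by
  constructor
  · intro hH v hv
    exact hH (.inl v) (hv.lift' Sum.inl fun u w huw => transGen_of_notMem_hitArcs hℓ huw.1 huw.2)
  · intro hG x hx
    obtain ⟨v, hv⟩ : ∃ v, TransGen (fun x y => (x, y) ∈ HArcs A ℓ \ F') (.inl v) (.inl v) := by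
      rcases x with v | ⟨a, i⟩
      exacts [⟨v, hx⟩, exists_inl_cycle_of_inr_cycle a i hx]
    obtain ⟨a, ha, i, hi, hva, hfree, hreach⟩ := exists_hNode_of_transGen_inl hv
    obtain ⟨rfl, rfl⟩ | ⟨rfl, -⟩ := hNode_eq_inl hva.symm
    · have ha' : a ∉ hitArcs A ℓ F' :=
        notMem_hitArcs_of_forall_notMem fun j hj => hfree j j.zero_le hj
      exact hG a.1 (.head' ⟨ha, ha'⟩ hreach)
    · omega

theorem isFAS_hArcs_iff (hℓ : ℓ ≠ 0) :
    IsFAS (HArcs A ℓ) F' ↔ F' ⊆ HArcs A ℓ ∧ IsFAS A (hitArcs A ℓ F') := by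
  simp [IsFAS, acyclic_hArcs_diff_iff hℓ, hitArcs_subset]

theorem hArcs_finite (hA : A.Finite) : (HArcs A ℓ).Finite :=
  hA.biUnion fun a _ => pathArcs_finite ℓ a

theorem setOf_isFAS_hArcs_hitArcs_eq (hℓ : ℓ ≠ 0) {F : Set (V × V)} (hF : IsFAS A F) :
    {F' | IsFAS (HArcs A ℓ) F' ∧ hitArcs A ℓ F' = F} =
      {T | T ⊆ ⋃ a ∈ F, PathArcs ℓ a ∧ ∀ a ∈ F, (T ∩ PathArcs ℓ a).Nonempty} := by
  ext F'
  simp only [mem_ofPred_eq, isFAS_hArcs_iff hℓ]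
  constructor
  · rintro ⟨⟨hsub, -⟩, rfl⟩
    refine ⟨fun p hp => ?_, fun a ha => ha.2⟩
    obtain ⟨b, hb, hpb⟩ := mem_iUnion₂.mp (hsub hp)
    exact mem_biUnion ⟨hb, p, hp, hpb⟩ hpb
  · rintro ⟨hsub, hmeet⟩
    have hhit : hitArcs A ℓ F' = F := by
      refine Subset.antisymm (fun a ⟨_, p, hp, hpa⟩ => ?_) fun a ha => ⟨hF.1 ha, hmeet a ha⟩
      obtain ⟨b, hb, hpb⟩ := mem_iUnion₂.mp (hsub hp)
      obtain rfl : a = b := pathArcs_pairwise_disjoint.eq (not_disjoint_iff.mpr ⟨p, hpa, hpb⟩)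
      exact hb
    exact ⟨⟨hsub.trans (biUnion_mono hF.1 fun _ _ => subset_rfl), hhit ▸ hF⟩, hhit⟩

theorem ncard_setOf_isFAS_hArcs_hitArcs_eq (hA : A.Finite) (hℓ : ℓ ≠ 0) {F : Set (V × V)}
    (hF : IsFAS A F) :
    {F' | IsFAS (HArcs A ℓ) F' ∧ hitArcs A ℓ F' = F}.ncard = (2 ^ ℓ - 1) ^ F.ncard := by
  rw [setOf_isFAS_hArcs_hitArcs_eq hℓ hF]
  exact ncard_setOf_subset_biUnion_meeting_each pathArcs_pairwise_disjoint (hA.subset hF.1)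
    (fun a _ => pathArcs_finite ℓ a) (fun a _ => ncard_pathArcs ℓ a)

theorem ncard_setOf_isFAS_hArcs_ncard_hitArcs_eq (hA : A.Finite) (hℓ : ℓ ≠ 0) (i : ℕ) :
    {F' | IsFAS (HArcs A ℓ) F' ∧ (hitArcs A ℓ F').ncard = i}.ncard =
      {F | IsFAS A F ∧ F.ncard = i}.ncard * (2 ^ ℓ - 1) ^ i := by
  have hfin : {F | IsFAS A F ∧ F.ncard = i}.Finite :=
    (finite_setOf_isFAS hA).subset fun _ hF => hF.1
  have hmaps : MapsTo (hitArcs A ℓ) {F' | IsFAS (HArcs A ℓ) F' ∧ (hitArcs A ℓ F').ncard = i}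
      hfin.toFinset := fun F' hF' => by
    simpa using ⟨((isFAS_hArcs_iff hℓ).mp hF'.1).2, hF'.2⟩
  rw [ncard_eq_sum_ncard_fiberwise ((finite_setOf_isFAS (hArcs_finite hA)).subset fun _ h => h.1)
    hmaps, ncard_eq_toFinset_card _ hfin, ← smul_eq_mul, ← Finset.sum_const]
  refine Finset.sum_congr rfl fun F hFi => ?_
  obtain ⟨hF, rfl⟩ := (Finite.mem_toFinset hfin).mp hFi
  rw [← ncard_setOf_isFAS_hArcs_hitArcs_eq hA hℓ hF]
  congr 1
  ext F'
  simp only [mem_ofPred_eq]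
  exact ⟨fun h => ⟨h.1.1, h.2⟩, fun ⟨h, hF'⟩ => ⟨⟨h, hF' ▸ rfl⟩, hF'⟩⟩

end Subdivision

open Subdivision

theorem count_fas_subdivision_general {V : Type*} [Fintype V] (A : Set (V × V))
    (ℓ : ℕ) (hℓ : 1 ≤ ℓ) :
    {F' : Set ((V ⊕ ((V × V) × ℕ)) × (V ⊕ ((V × V) × ℕ))) |
        IsFAS (HArcs A ℓ) F'}.ncard =
      ∑ i ∈ Finset.range (A.ncard + 1),
        {F : Set (V × V) | IsFAS A F ∧ F.ncard = i}.ncard * (2 ^ ℓ - 1) ^ i := by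
  have hA : A.Finite := A.toFinite
  have hmaps : MapsTo (fun F' => (hitArcs A ℓ F').ncard) {F' | IsFAS (HArcs A ℓ) F'}
      (Finset.range (A.ncard + 1)) := fun F' _ => by
    simpa [Nat.lt_succ_iff] using ncard_le_ncard hitArcs_subset hA
  rw [ncard_eq_sum_ncard_fiberwise (finite_setOf_isFAS (hArcs_finite hA)) hmaps]
  exact Finset.sum_congr rfl fun i _ => ncard_setOf_isFAS_hArcs_ncard_hitArcs_eq hA (by omega) i

/-- the total number of feedback arc sets of `H'(ℓ)` equals
`Σ_{i=0}^{|A|} F_i(G)·(2^ℓ − 1)^i` where `F_i(G)` is the number of feedback arc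
sets of `G` of cardinality exactly `i`. -/
theorem count_fas_subdivision {V : Type*} [Fintype V] (A : Set (V × V))
    (hloopless : ∀ v : V, (v, v) ∉ A) (ℓ : ℕ) (hℓ : 1 ≤ ℓ) :
    {F' : Set ((V ⊕ ((V × V) × ℕ)) × (V ⊕ ((V × V) × ℕ))) |
        IsFAS (HArcs A ℓ) F'}.ncard =
      ∑ i ∈ Finset.range (A.ncard + 1),
        {F : Set (V × V) | IsFAS A F ∧ F.ncard = i}.ncard * (2 ^ ℓ - 1) ^ i :=
  count_fas_subdivision_general A ℓ hℓ
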